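/- Let Π = {𝓗,Γ₀,Γ₁} be a unitary boundary triple for A* with T = dom Γ, Weyl function M, γ-field γ and A₀ = ker Γ₀. Then the following are equivalent: (i) A₀ is essentially selfadjoint (equivalently, ran(A₀−λ) is dense in 𝔥 for some, equivalently every, λ ∈ ℂ₊ and for some, equivalently every, λ ∈ ℂ₋); (ii) γ(i) and γ(−i) are closable operators; (iii) γ(λ) is closable for every λ ∈ ℂ∖ℝ and dom(clos γ(λ)) = dom(clos γ(i)) for all λ ∈ ℂ₊ and dom(clos γ(λ)) = dom(clos γ(−i)) for all λ ∈ ℂ₋; (iv) the forms t_{M(i)} and t_{M(−i)} are closable; (v) t_{M(λ)} is closable for every λ ∈ ℂ∖ℝ, with dom(clos t_{M(λ)}) = dom(clos t_{M(i)}) for λ ∈ ℂ₊ and dom(clos t_{M(λ)}) = dom(clos t_{M(−i)}) for λ ∈ ℂ₋. Moreover, if these conditions hold, then dom(clos t_{M(λ)}) = dom(clos γ(λ)) = ran(clos(graph Γ₀)) for every λ ∈ ℂ∖ℝ, where clos(graph Γ₀) is the closure of the graph of Γ₀ in (𝔥×𝔥)×𝓗. -/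

import Mathlib

noncomputable section

open Filter Topology

namespace BT

local notation "⟪" x ", " y "⟫" => @inner ℂ _ _ x y

section Ops
variable {α β γ' : Type*}

def domR (T : Set (α × β)) : Set α := {x | ∃ y, (x, y) ∈ T}
def ranR (T : Set (α × β)) : Set β := {y | ∃ x, (x, y) ∈ T}
def kerR [Zero β] (T : Set (α × β)) : Set α := {x | (x, (0 : β)) ∈ T}
def mulR [Zero α] (T : Set (α × β)) : Set β := {y | ((0 : α), y) ∈ T}
def invR (T : Set (α × β)) : Set (β × α) := {p | (p.2, p.1) ∈ T}
def compR (T₂ : Set (β × γ')) (T₁ : Set (α × β)) : Set (α × γ') :=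
  {p | ∃ y, (p.1, y) ∈ T₁ ∧ (y, p.2) ∈ T₂}
def csum [Add α] [Add β] (T₁ T₂ : Set (α × β)) : Set (α × β) :=
  {p | ∃ q ∈ T₁, ∃ r ∈ T₂, p = (q.1 + r.1, q.2 + r.2)}

def IsLinRel {M : Type*} [AddCommGroup M] [Module ℂ M] (s : Set M) : Prop :=
  ∃ p : Submodule ℂ M, (p : Set M) = s

def IsBddRel [Norm α] [Norm β] (T : Set (α × β)) : Prop :=
  ∃ C : ℝ, ∀ p ∈ T, ‖p.2‖ ≤ C * ‖p.1‖

def BddInv [NormedAddCommGroup α] (T : Set (α × α)) : Prop :=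
  (∀ v, ∃ p ∈ T, p.2 = v) ∧ (∀ p ∈ T, ∀ q ∈ T, p.2 = q.2 → p.1 = q.1) ∧
    ∃ C : ℝ, ∀ p ∈ T, ‖p.1‖ ≤ C * ‖p.2‖
end Ops

section Shifts
variable {α : Type*} [AddCommGroup α] [Module ℂ α]

def shiftSub (T : Set (α × α)) (l : ℂ) : Set (α × α) :=
  {p | ∃ q ∈ T, p = (q.1, q.2 - l • q.1)}
def shiftAdd (T : Set (α × α)) (l : ℂ) : Set (α × α) :=
  {p | ∃ q ∈ T, p = (q.1, q.2 + l • q.1)}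
def hatN (T : Set (α × α)) (l : ℂ) : Set (α × α) := {p ∈ T | p.2 = l • p.1}
def Nlam (T : Set (α × α)) (l : ℂ) : Set α := {f | (f, l • f) ∈ T}
def Hrel (A0s : Set (α × α)) (l : ℂ) : Set (α × (α × α)) :=
  {q | q.2 ∈ A0s ∧ q.2.2 - l • q.2.1 = q.1}
end Shifts

section InnerDefs
variable {E F : Type*} [NormedAddCommGroup E] [InnerProductSpace ℂ E]
  [NormedAddCommGroup F] [InnerProductSpace ℂ F]

def adjR (S : Set (F × E)) : Set (E × F) :=
  {p | ∀ q ∈ S, ⟪p.1, q.2⟫ = ⟪p.2, q.1⟫}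

def IsClosedSymRel (A : Set (E × E)) : Prop :=
  IsLinRel A ∧ IsClosed A ∧ A ⊆ adjR A

def kIP (p q : E × E) : ℂ := -Complex.I * ⟪q.1, p.2⟫ + Complex.I * ⟪q.2, p.1⟫

def kreinOrth (S : Set (E × E)) : Set (E × E) := {v | ∀ u ∈ S, kIP u v = 0}

def GreenPair (Γ : Set ((E × E) × (F × F))) : Prop :=
  ∀ p ∈ Γ, ∀ q ∈ Γ,
    ⟪q.1.1, p.1.2⟫ - ⟪q.1.2, p.1.1⟫ = ⟪q.2.1, p.2.2⟫ - ⟪q.2.2, p.2.1⟫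

def G0 (Γ : Set ((E × E) × (F × F))) : Set ((E × E) × F) := {p | ∃ h', (p.1, (p.2, h')) ∈ Γ}
def G1 (Γ : Set ((E × E) × (F × F))) : Set ((E × E) × F) := {p | ∃ h, (p.1, (h, p.2)) ∈ Γ}
def A0 (Γ : Set ((E × E) × (F × F))) : Set (E × E) := kerR (G0 Γ)
def A1 (Γ : Set ((E × E) × (F × F))) : Set (E × E) := kerR (G1 Γ)
def weyl (Γ : Set ((E × E) × (F × F))) (l : ℂ) : Set (F × F) :=
  {p | ∃ f : E, ((f, l • f), p) ∈ Γ}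
def gfield (Γ : Set ((E × E) × (F × F))) (l : ℂ) : Set (F × E) :=
  {p | ∃ h', ((p.2, l • p.2), (p.1, h')) ∈ Γ}

def kreinAdj (Γ : Set ((E × E) × (F × F))) : Set ((F × F) × (E × E)) :=
  {q | ∀ p ∈ Γ, kIP p.1 q.2 = kIP p.2 q.1}

def IsIsomPair (A : Set (E × E)) (Γ : Set ((E × E) × (F × F))) : Prop :=
  IsLinRel Γ ∧ domR Γ ⊆ adjR A ∧ GreenPair Γ
def IsDomDense (A : Set (E × E)) (Γ : Set ((E × E) × (F × F))) : Prop :=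
  closure (domR Γ) = adjR A
def IsABPair (A : Set (E × E)) (Γ : Set ((E × E) × (F × F))) : Prop :=
  IsIsomPair A Γ ∧ IsDomDense A Γ ∧ Dense (ranR (G0 Γ)) ∧ A0 Γ = adjR (A0 Γ)
def IsBPair (A : Set (E × E)) (Γ : Set ((E × E) × (F × F))) : Prop :=
  IsABPair A Γ ∧ ranR (G0 Γ) = Set.univ
def IsUnitaryPair (A : Set (E × E)) (Γ : Set ((E × E) × (F × F))) : Prop :=
  GreenPair Γ ∧ domR Γ ⊆ adjR A ∧ IsDomDense A Γ ∧ invR Γ = kreinAdj Γ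
def IsUnitaryBT (A : Set (E × E)) (Γ : Set ((E × E) × (F × F))) : Prop :=
  IsUnitaryPair A Γ ∧ mulR Γ = {0}
def IsOrdinaryBT (A : Set (E × E)) (Γ : Set ((E × E) × (F × F))) : Prop :=
  IsIsomPair A Γ ∧ mulR Γ = {0} ∧ domR Γ = adjR A ∧ ranR Γ = Set.univ

def Erel (Γ : Set ((E × E) × (F × F))) (m : ℂ) : Set (F × F) :=
  {p | ∃ u' v', (p.1, u') ∈ weyl Γ m ∧ (p.1, v') ∈ weyl Γ ((starRingEnd ℂ) m) ∧
        p.2 = (2 : ℂ)⁻¹ • (u' + v')}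

def triTransform (Γ : Set ((E × E) × (F × F))) (e : Set (F × F)) :
    Set ((E × E) × (F × F)) :=
  {q | ∃ h h' w, (q.1, (h, h')) ∈ Γ ∧ (h, w) ∈ e ∧ q.2 = (h, w + h')}

def formVal (l : ℂ) (u u' : F) : ℝ :=
  ((l - (starRingEnd ℂ) l)⁻¹ * (⟪u, u'⟫ - ⟪u', u⟫)).re

def FormClosable (l : ℂ) (Ms : Set (F × F)) : Prop :=
  ∀ u u' : ℕ → F, (∀ n, (u n, u' n) ∈ Ms) →
    Tendsto u atTop (nhds (0 : F)) →
    Tendsto (fun nm : ℕ × ℕ => formVal l (u nm.1 - u nm.2) (u' nm.1 - u' nm.2)) atTop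
      (nhds (0 : ℝ)) →
    Tendsto (fun n => formVal l (u n) (u' n)) atTop (nhds (0 : ℝ))

def formClosureDom (l : ℂ) (Ms : Set (F × F)) : Set F :=
  {v | ∃ u u' : ℕ → F, (∀ n, (u n, u' n) ∈ Ms) ∧ Tendsto u atTop (nhds v) ∧
    Tendsto (fun nm : ℕ × ℕ => formVal l (u nm.1 - u nm.2) (u' nm.1 - u' nm.2)) atTop
      (nhds (0 : ℝ))}

end InnerDefs

section CompleteDefs
variable {F : Type*} [NormedAddCommGroup F] [InnerProductSpace ℂ F] [CompleteSpace F]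

def IsNevFun (M₀ : ℂ → F →L[ℂ] F) : Prop :=
  DifferentiableOn ℂ M₀ {l : ℂ | l.im ≠ 0} ∧
  (∀ l : ℂ, l.im ≠ 0 → M₀ ((starRingEnd ℂ) l) = ContinuousLinearMap.adjoint (M₀ l)) ∧
  (∀ l : ℂ, 0 < l.im → ∀ u, 0 ≤ (⟪u, M₀ l u⟫).im)

def ImOp (Tb : F →L[ℂ] F) : F →L[ℂ] F :=
  ((2 : ℂ) * Complex.I)⁻¹ • (Tb - ContinuousLinearMap.adjoint Tb)

end CompleteDefs

/-!
Unitarity of `Γ` says that its main transform, a relation in the Hilbert sum `𝔥 ⊕ 𝓗`, is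
selfadjoint. Its resolvent at a nonreal `z` is a bounded operator `R z` sending `(a, w)` to the
unique `(f, Γ₁ f̂)` with `f̂ = (f, a + z f) ∈ T` and `Γ₀ f̂ = w + z Γ₁ f̂`.

* Green's identity puts every `(-Γ₁ ĝ, g' - λ̄ g)`, `ĝ ∈ A₀`, in `γ(λ)^⊥`, and with `R λ̄` one
  shows that there is nothing else in `γ(λ)^⊥`. Hence `mul (clos γ(λ)) = ker (A₀* - λ)`, and by
  von Neumann's criterion `A₀` is essentially selfadjoint iff these defect spaces vanish at `±i`.
* Green's identity also gives `t_{M(λ)}[Γ₀ f̂] = ‖f‖²` for `f̂ ∈ N̂_λ(T)`, so the form and `γ(λ)`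
  are closable together, with the same closure domains.
* If `ran (clos A₀ - λ) = 𝔥`, then `R λ` splits each element of `clos Γ₀` into an element of
  `clos γ(λ)` and one of `clos A₀`, whence `ran (clos Γ₀) = dom (clos γ(λ))`.
-/

theorem mem_ranR_shiftSub {M : Type*} [AddCommGroup M] [Module ℂ M] {T : Set (M × M)} {l : ℂ}
    {v : M} : v ∈ ranR (shiftSub T l) ↔ ∃ q ∈ T, q.2 - l • q.1 = v := by
  simp only [ranR, shiftSub, Set.mem_ofPred_eq, Prod.ext_iff]
  exact ⟨fun ⟨_, q, hq, _, hv⟩ => ⟨q, hq, hv.symm⟩, fun ⟨q, hq, hv⟩ => ⟨q.1, q, hq, rfl, hv.symm⟩⟩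

namespace IsLinRel

variable {M : Type*} [AddCommGroup M] [Module ℂ M] {s : Set M}

theorem of_mem (h0 : (0 : M) ∈ s) (hadd : ∀ a ∈ s, ∀ b ∈ s, a + b ∈ s)
    (hsmul : ∀ (c : ℂ), ∀ a ∈ s, c • a ∈ s) : IsLinRel s :=
  ⟨{ carrier := s, zero_mem' := h0, add_mem' := fun ha hb => hadd _ ha _ hb,
     smul_mem' := fun c _ ha => hsmul c _ ha }, rfl⟩

theorem zero_mem (hs : IsLinRel s) : (0 : M) ∈ s := by
  obtain ⟨p, rfl⟩ := hs; exact p.zero_mem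

theorem add_mem (hs : IsLinRel s) {a b : M} (ha : a ∈ s) (hb : b ∈ s) : a + b ∈ s := by
  obtain ⟨p, rfl⟩ := hs; exact p.add_mem ha hb

theorem smul_mem (hs : IsLinRel s) (c : ℂ) {a : M} (ha : a ∈ s) : c • a ∈ s := by
  obtain ⟨p, rfl⟩ := hs; exact p.smul_mem c ha

theorem sub_mem (hs : IsLinRel s) {a b : M} (ha : a ∈ s) (hb : b ∈ s) : a - b ∈ s := by
  obtain ⟨p, rfl⟩ := hs; exact p.sub_mem ha hb

theorem closure [TopologicalSpace M] [IsTopologicalAddGroup M] [ContinuousConstSMul ℂ M]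
    (hs : IsLinRel s) : IsLinRel (_root_.closure s) := by
  obtain ⟨p, rfl⟩ := hs; exact ⟨p.topologicalClosure, p.topologicalClosure_coe⟩

theorem ranR_shiftSub {T : Set (M × M)} (hT : IsLinRel T) (l : ℂ) :
    IsLinRel (ranR (shiftSub T l)) := by
  refine .of_mem (mem_ranR_shiftSub.2 ⟨0, hT.zero_mem, by simp⟩) ?_ fun c v hv => ?_
  · simp only [mem_ranR_shiftSub]
    rintro _ ⟨a, ha, rfl⟩ _ ⟨b, hb, rfl⟩
    exact ⟨a + b, hT.add_mem ha hb, by simp only [Prod.fst_add, Prod.snd_add, smul_add]; abel⟩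
  · obtain ⟨a, ha, rfl⟩ := mem_ranR_shiftSub.1 hv
    exact mem_ranR_shiftSub.2 ⟨c • a, hT.smul_mem c ha, by simp [smul_sub, smul_comm c l]⟩

end IsLinRel

theorem IsBddRel.closure_domR_subset {X Y : Type*} [NormedAddCommGroup X] [NormedSpace ℂ X]
    [NormedAddCommGroup Y] [NormedSpace ℂ Y] [CompleteSpace Y] {B : Set (X × Y)}
    (hB : IsBddRel B) (hlin : IsLinRel B) : closure (domR B) ⊆ domR (closure B) := by
  intro x hx
  obtain ⟨C, hC⟩ := hB
  obtain ⟨xs, hxs, hlim⟩ := mem_closure_iff_seq_limit.mp hx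
  choose ys hys using hxs
  have hcauchy : CauchySeq ys := by
    refine cauchySeq_iff_tendsto_dist_atTop_0.2 <| squeeze_zero (fun _ => dist_nonneg)
      (fun nm => ?_) (by simpa using (cauchySeq_iff_tendsto_dist_atTop_0.1
        hlim.cauchySeq).const_mul C)
    simpa [dist_eq_norm] using hC _ (hlin.sub_mem (hys nm.1) (hys nm.2))
  obtain ⟨y, hy⟩ := cauchySeq_tendsto_of_complete hcauchy
  exact ⟨y, mem_closure_of_tendsto (hlim.prodMk_nhds hy) (.of_forall hys)⟩

theorem cauchySeq_iff_tendsto_norm_sub_sq {X : Type*} [SeminormedAddCommGroup X] {g : ℕ → X} :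
    CauchySeq g ↔ Tendsto (fun nm : ℕ × ℕ => ‖g nm.1 - g nm.2‖ ^ 2) atTop (𝓝 0) := by
  rw [cauchySeq_iff_tendsto_dist_atTop_0]
  refine ⟨fun h => by simpa [dist_eq_norm] using h.pow 2, fun h => ?_⟩
  simpa [Real.sqrt_sq (norm_nonneg _), dist_eq_norm] using h.sqrt

section Orthogonality

variable {G : Type*} [NormedAddCommGroup G] [InnerProductSpace ℂ G] [CompleteSpace G]

theorem IsLinRel.dense_iff {s : Set G} (hs : IsLinRel s) :
    Dense s ↔ ∀ w : G, (∀ v ∈ s, ⟪w, v⟫ = 0) → w = 0 := by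
  obtain ⟨p, rfl⟩ := hs
  rw [Submodule.dense_iff_topologicalClosure_eq_top, Submodule.topologicalClosure_eq_top_iff,
    Submodule.eq_bot_iff]
  simp only [Submodule.mem_orthogonal', SetLike.mem_coe]

variable {X Y : Type*} [NormedAddCommGroup X] [InnerProductSpace ℂ X] [CompleteSpace X]
  [NormedAddCommGroup Y] [InnerProductSpace ℂ Y] [CompleteSpace Y]

theorem IsLinRel.mem_closure_of_forall_inner {s : Set (X × Y)} (hs : IsLinRel s) {p : X × Y}
    (h : ∀ a b, (∀ q ∈ s, ⟪q.1, a⟫ + ⟪q.2, b⟫ = 0) → ⟪p.1, a⟫ + ⟪p.2, b⟫ = 0) :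
    p ∈ _root_.closure s := by
  obtain ⟨K, rfl⟩ := hs
  let e := WithLp.prodContinuousLinearEquiv 2 ℂ X Y
  let L := K.comap (e : WithLp 2 (X × Y) →ₗ[ℂ] X × Y)
  have hL : e.symm p ∈ Lᗮᗮ := by
    refine (Submodule.mem_orthogonal' _ _).2 fun w hw => ?_
    simpa [e] using h w.fst w.snd fun q hq => by
      simpa [e] using (Submodule.mem_orthogonal _ _).1 hw (e.symm q) (by simpa [L] using hq)
  rw [Submodule.orthogonal_orthogonal_eq_closure, ← SetLike.mem_coe,
    Submodule.topologicalClosure_coe] at hL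
  simpa using map_mem_closure e.continuous hL fun x hx => hx

end Orthogonality

section Adjoint

variable {X Y : Type*} [NormedAddCommGroup X] [InnerProductSpace ℂ X]
  [NormedAddCommGroup Y] [InnerProductSpace ℂ Y]

theorem isLinRel_adjR (S : Set (Y × X)) : IsLinRel (adjR S) :=
  .of_mem (fun q _ => by simp) (fun a ha b hb q hq => by simp [ha q hq, hb q hq])
    fun c a ha q hq => by simp [ha q hq]

theorem isClosed_adjR (S : Set (Y × X)) : IsClosed (adjR S) := by
  simp only [adjR, Set.ofPred_forall]
  exact isClosed_biInter fun q _ => isClosed_eq (by fun_prop) (by fun_prop)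

theorem adjR_closure (S : Set (Y × X)) : adjR (closure S) = adjR S := by
  refine subset_antisymm (fun p hp q hq => hp q (subset_closure hq)) fun p hp q hq => ?_
  have hcl : IsClosed {q : Y × X | ⟪p.1, q.2⟫ = ⟪p.2, q.1⟫} :=
    isClosed_eq (by fun_prop) (by fun_prop)
  exact closure_minimal (fun q hq => hp q hq) hcl hq

end Adjoint

section Symmetric

variable {G : Type*} [NormedAddCommGroup G] [InnerProductSpace ℂ G] {T : Set (G × G)}

theorem abs_im_mul_norm_le_norm_sub_smul {x y : G} (hxy : ⟪x, y⟫ = ⟪y, x⟫) (z : ℂ) :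
    |z.im| * ‖x‖ ≤ ‖y - z • x‖ := by
  have hreal : (⟪x, y⟫).im = 0 := by
    rw [← Complex.conj_eq_iff_im, inner_conj_symm, hxy]
  have him : (⟪x, y - z • x⟫).im = -(z.im * ‖x‖ ^ 2) := by
    rw [inner_sub_right, inner_smul_right, inner_self_eq_norm_sq_to_K]
    simp [hreal, ← Complex.ofReal_pow]
  have hcs : |z.im| * ‖x‖ * ‖x‖ ≤ ‖y - z • x‖ * ‖x‖ := calc
    |z.im| * ‖x‖ * ‖x‖ = |(⟪x, y - z • x⟫).im| := by
      rw [him, abs_neg, abs_mul, abs_of_nonneg (sq_nonneg ‖x‖)]; ring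
    _ ≤ ‖⟪x, y - z • x⟫‖ := Complex.abs_im_le_norm _
    _ ≤ ‖x‖ * ‖y - z • x‖ := norm_inner_le_norm _ _
    _ = ‖y - z • x‖ * ‖x‖ := mul_comm _ _
  rcases (norm_nonneg x).eq_or_lt with hx | hx
  · rw [← hx, mul_zero]; exact norm_nonneg _
  · exact le_of_mul_le_mul_right hcs hx

theorem norm_le_of_add_smul_mem (hsym : T ⊆ adjR T) {z : ℂ} (hz : z.im ≠ 0) {x y : G}
    (h : (x, y + z • x) ∈ T) : ‖x‖ ≤ |z.im|⁻¹ * ‖y‖ := by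
  have := abs_im_mul_norm_le_norm_sub_smul (hsym h _ h) z
  rw [add_sub_cancel_right] at this
  rwa [inv_mul_eq_div, le_div_iff₀' (abs_pos.2 hz)]

theorem closure_subset_adjR (hsym : T ⊆ adjR T) : closure T ⊆ adjR T :=
  closure_minimal hsym (isClosed_adjR T)

theorem eq_zero_of_smul_mem_closure (hsym : T ⊆ adjR T) {z : ℂ} (hz : z.im ≠ 0) {w : G}
    (hw : (w, z • w) ∈ closure T) : w = 0 := by
  have hsymcl : closure T ⊆ adjR (closure T) := adjR_closure T ▸ closure_subset_adjR hsym
  have := abs_im_mul_norm_le_norm_sub_smul (hsymcl hw _ hw) z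
  simp only [sub_self, norm_zero] at this
  exact norm_eq_zero.1 (le_antisymm (nonpos_of_mul_nonpos_right this (abs_pos.2 hz))
    (norm_nonneg w))

theorem mem_Nlam_adjR_iff {l : ℂ} {w : G} :
    w ∈ Nlam (adjR T) l ↔ ∀ v ∈ ranR (shiftSub T (starRingEnd ℂ l)), ⟪w, v⟫ = 0 := by
  simp only [Nlam, adjR, Set.mem_ofPred_eq, mem_ranR_shiftSub, forall_exists_index, and_imp]
  constructor
  · rintro h _ q hq rfl
    rw [inner_sub_right, inner_smul_right, h q hq, inner_smul_left, sub_self]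
  · intro h q hq
    have := h _ q hq rfl
    rwa [inner_sub_right, inner_smul_right, sub_eq_zero, ← inner_smul_left] at this

theorem zero_mem_Nlam_adjR (l : ℂ) : (0 : G) ∈ Nlam (adjR T) l := by
  rw [Nlam, Set.mem_ofPred_eq, smul_zero, Prod.mk_zero_zero]; exact (isLinRel_adjR T).zero_mem

theorem Nlam_adjR_eq_zero_of_closure_eq_adjR (hsym : T ⊆ adjR T) (h : closure T = adjR T)
    {l : ℂ} (hl : l.im ≠ 0) : Nlam (adjR T) l = {0} :=
  Set.eq_singleton_iff_unique_mem.2 ⟨zero_mem_Nlam_adjR l,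
    fun _ hw => eq_zero_of_smul_mem_closure hsym hl (h ▸ hw)⟩

variable [CompleteSpace G]

theorem dense_ranR_shiftSub_iff (hlin : IsLinRel T) {l : ℂ} :
    Dense (ranR (shiftSub T l)) ↔ Nlam (adjR T) (starRingEnd ℂ l) = {0} := by
  rw [(hlin.ranR_shiftSub l).dense_iff, Set.eq_singleton_iff_unique_mem,
    and_iff_right (zero_mem_Nlam_adjR _)]
  simp only [mem_Nlam_adjR_iff, Complex.conj_conj]

theorem closure_ranR_shiftSub_subset (hlin : IsLinRel T) (hsym : T ⊆ adjR T) {l : ℂ}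
    (hl : l.im ≠ 0) : closure (ranR (shiftSub T l)) ⊆ ranR (shiftSub (closure T) l) := by
  -- the inverse of `T - l`
  let B : Set (G × G) := {p | (p.2, p.1 + l • p.2) ∈ T}
  have hB : IsBddRel B := ⟨|l.im|⁻¹, fun _ hp => norm_le_of_add_smul_mem hsym hl hp⟩
  have hBlin : IsLinRel B := .of_mem (by simpa [B, Prod.mk_zero_zero] using hlin.zero_mem)
    (fun a ha b hb => by simpa [B, smul_add, add_add_add_comm] using hlin.add_mem ha hb)
    fun c a ha => by simpa [B, smul_comm c l] using hlin.smul_mem c ha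
  have hdom : domR B = ranR (shiftSub T l) := by
    ext v
    simp only [domR, mem_ranR_shiftSub]
    exact ⟨fun ⟨x, hx⟩ => ⟨_, hx, by simp⟩, fun ⟨q, hq, hv⟩ => ⟨q.1, by simpa [B, ← hv] using hq⟩⟩
  have hclB : closure B ⊆ {p | (p.2, p.1 + l • p.2) ∈ closure T} :=
    closure_minimal (fun p hp => subset_closure hp) (isClosed_closure.preimage (by fun_prop))
  rw [← hdom]
  intro v hv
  obtain ⟨x, hx⟩ := hB.closure_domR_subset hBlin hv
  exact mem_ranR_shiftSub.2 ⟨_, hclB hx, by simp⟩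

theorem closure_eq_adjR_of_Nlam_eq_zero (hlin : IsLinRel T) (hsym : T ⊆ adjR T) {l : ℂ}
    (hl : l.im ≠ 0) (h1 : Nlam (adjR T) l = {0})
    (h2 : Nlam (adjR T) (starRingEnd ℂ l) = {0}) : closure T = adjR T := by
  refine subset_antisymm (closure_subset_adjR hsym) fun p hp => ?_
  obtain ⟨q, hq, hqp⟩ := mem_ranR_shiftSub.1 <| closure_ranR_shiftSub_subset hlin hsym hl
    ((dense_ranR_shiftSub_iff hlin).2 h2 (p.2 - l • p.1))
  have hd : p.1 - q.1 ∈ Nlam (adjR T) l := by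
    have := (isLinRel_adjR T).sub_mem hp (closure_subset_adjR hsym hq)
    show (p.1 - q.1, l • (p.1 - q.1)) ∈ adjR T
    convert this using 1
    exact Prod.ext rfl (by simp only [Prod.snd_sub]; linear_combination (norm := module) hqp)
  rw [h1, Set.mem_singleton_iff, sub_eq_zero] at hd
  have : p = q := Prod.ext hd (by simpa [hd] using hqp.symm)
  exact this ▸ hq

theorem closure_eq_adjR_iff_Nlam_eq_zero (hlin : IsLinRel T) (hsym : T ⊆ adjR T) {l : ℂ}
    (hl : l.im ≠ 0) :
    closure T = adjR T ↔ Nlam (adjR T) l = {0} ∧ Nlam (adjR T) (starRingEnd ℂ l) = {0} :=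
  ⟨fun h => ⟨Nlam_adjR_eq_zero_of_closure_eq_adjR hsym h hl,
      Nlam_adjR_eq_zero_of_closure_eq_adjR hsym h (by simpa using hl)⟩,
    fun h => closure_eq_adjR_of_Nlam_eq_zero hlin hsym hl h.1 h.2⟩

theorem closure_eq_adjR_iff_forall_dense (hlin : IsLinRel T) (hsym : T ⊆ adjR T) :
    closure T = adjR T ↔ ∀ l : ℂ, l.im ≠ 0 → Dense (ranR (shiftSub T l)) := by
  refine ⟨fun h l hl => (dense_ranR_shiftSub_iff hlin).2
    (Nlam_adjR_eq_zero_of_closure_eq_adjR hsym h (by simpa using hl)), fun h => ?_⟩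
  have hI : Complex.I.im ≠ 0 := by simp
  refine (closure_eq_adjR_iff_Nlam_eq_zero hlin hsym hI).2 ⟨?_, ?_⟩
  · simpa using (dense_ranR_shiftSub_iff hlin).1 (h (-Complex.I) (by simp))
  · exact (dense_ranR_shiftSub_iff hlin).1 (h _ hI)

theorem ranR_shiftSub_closure_eq_univ (hlin : IsLinRel T) (hsym : T ⊆ adjR T)
    (h : closure T = adjR T) {l : ℂ} (hl : l.im ≠ 0) :
    ranR (shiftSub (closure T) l) = Set.univ :=
  Set.eq_univ_of_forall fun v => closure_ranR_shiftSub_subset hlin hsym hl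
    ((closure_eq_adjR_iff_forall_dense hlin hsym).1 h l hl v)

theorem exists_resolvent {S : Set (G × G)} (hS : adjR S = S) {z : ℂ} (hz : z.im ≠ 0) :
    ∃ R : G →L[ℂ] G, ∀ x y, (x, y + z • x) ∈ S ↔ x = R y := by
  have hlin : IsLinRel S := hS ▸ isLinRel_adjR S
  have hsym : S ⊆ adjR S := hS.ge
  have hclosed : closure S = S := (hS ▸ isClosed_adjR S).closure_eq
  have hsurj : ∀ y, ∃ x, (x, y + z • x) ∈ S := fun y => by
    have hran := ranR_shiftSub_closure_eq_univ hlin hsym (hclosed.trans hS.symm) hz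
    rw [hclosed] at hran
    obtain ⟨q, hq, rfl⟩ := mem_ranR_shiftSub.1 (hran ▸ Set.mem_univ y)
    exact ⟨q.1, by simpa using hq⟩
  choose R hR using hsurj
  have huniq : ∀ x y, (x, y + z • x) ∈ S → x = R y := fun x y hx => by
    have hd := hlin.sub_mem hx (hR y)
    rw [Prod.mk_sub_mk, add_sub_add_left_eq_sub, ← smul_sub] at hd
    exact sub_eq_zero.1 (eq_zero_of_smul_mem_closure hsym hz (subset_closure hd))
  let Rₗ : G →ₗ[ℂ] G :=
    { toFun := R
      map_add' := fun y y' => (huniq _ _ (by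
        simpa [smul_add, add_add_add_comm] using hlin.add_mem (hR y) (hR y'))).symm
      map_smul' := fun c y => (huniq _ _ (by
        simpa [smul_add, smul_comm c z] using hlin.smul_mem c (hR y))).symm }
  refine ⟨Rₗ.mkContinuous _ fun y => norm_le_of_add_smul_mem hsym hz (hR y),
    fun x y => ⟨huniq x y, ?_⟩⟩
  rintro rfl
  exact hR y

end Symmetric

section BoundaryTriple

variable {E F : Type*} [NormedAddCommGroup E] [InnerProductSpace ℂ E]
  [NormedAddCommGroup F] [InnerProductSpace ℂ F] {Γ : Set ((E × E) × (F × F))}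

theorem mem_of_invR_eq_kreinAdj_iff (hGU : invR Γ = kreinAdj Γ) {p : (E × E) × (F × F)} :
    p ∈ Γ ↔ ∀ q ∈ Γ, kIP q.1 p.1 = kIP q.2 p.2 := by
  change (p.2, p.1) ∈ invR Γ ↔ _
  rw [hGU]; rfl

theorem isLinRel_of_invR_eq_kreinAdj (hGU : invR Γ = kreinAdj Γ) : IsLinRel Γ := by
  refine .of_mem ((mem_of_invR_eq_kreinAdj_iff hGU).2 fun q _ => by simp [kIP])
    (fun a ha b hb => (mem_of_invR_eq_kreinAdj_iff hGU).2 fun q hq => ?_)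
    fun c a ha => (mem_of_invR_eq_kreinAdj_iff hGU).2 fun q hq => ?_
  · rw [mem_of_invR_eq_kreinAdj_iff hGU] at ha hb
    simp only [kIP, Prod.fst_add, Prod.snd_add, inner_add_left] at ha hb ⊢
    linear_combination ha q hq + hb q hq
  · rw [mem_of_invR_eq_kreinAdj_iff hGU] at ha
    simp only [kIP, Prod.smul_fst, Prod.smul_snd, inner_smul_left] at ha ⊢
    linear_combination (starRingEnd ℂ c) * ha q hq

/-- The main transform `{((f, Γ₁ f̂), (f', Γ₀ f̂)) : f̂ = (f, f') ∈ T}` of `Γ`, a relation in the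
Hilbert sum `E ⊕ F`. -/
def mainTransform (Γ : Set ((E × E) × (F × F))) : Set (WithLp 2 (E × F) × WithLp 2 (E × F)) :=
  {x | ((x.1.fst, x.2.fst), (x.2.snd, x.1.snd)) ∈ Γ}

theorem adjR_mainTransform (hGU : invR Γ = kreinAdj Γ) :
    adjR (mainTransform Γ) = mainTransform Γ := by
  ext x
  simp only [mainTransform, adjR, Set.mem_ofPred_eq]
  rw [mem_of_invR_eq_kreinAdj_iff hGU]
  constructor
  · intro h q hq
    have := h (WithLp.toLp 2 (q.1.1, q.2.2), WithLp.toLp 2 (q.1.2, q.2.1)) (by simpa using hq)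
    simp only [kIP, WithLp.prod_inner_apply, WithLp.ofLp_fst, WithLp.ofLp_snd] at this ⊢
    linear_combination -Complex.I * this
  · intro h q hq
    have := h _ hq
    simp only [kIP, WithLp.prod_inner_apply, WithLp.ofLp_fst, WithLp.ofLp_snd] at this ⊢
    linear_combination (norm := ring_nf) Complex.I * this
    simp only [Complex.I_sq]
    ring

theorem exists_boundaryResolvent [CompleteSpace E] [CompleteSpace F]
    (hGU : invR Γ = kreinAdj Γ) {z : ℂ} (hz : z.im ≠ 0) :
    ∃ R : E × F →L[ℂ] E × F, ∀ (f a : E) (h w : F),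
      ((f, a + z • f), (w + z • h, h)) ∈ Γ ↔ (f, h) = R (a, w) := by
  obtain ⟨R, hR⟩ := exists_resolvent (adjR_mainTransform hGU) hz
  let e := WithLp.prodContinuousLinearEquiv 2 ℂ E F
  refine ⟨e.toContinuousLinearMap ∘L R ∘L e.symm.toContinuousLinearMap, fun f a h w => ?_⟩
  have := hR (WithLp.toLp 2 (f, h)) (WithLp.toLp 2 (a, w))
  simp only [mainTransform, Set.mem_ofPred_eq, WithLp.add_fst, WithLp.add_snd, WithLp.smul_fst,
    WithLp.smul_snd, WithLp.toLp_fst, WithLp.toLp_snd] at this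
  rw [this]
  exact ⟨fun h' => by simp [e, ← h'], fun h' => by simp [e, h']⟩

end BoundaryTriple

section GammaField

variable {E F : Type*} [NormedAddCommGroup E] [InnerProductSpace ℂ E]
  [NormedAddCommGroup F] [InnerProductSpace ℂ F] {Γ : Set ((E × E) × (F × F))} {l : ℂ}

theorem isLinRel_A0 (hΓ : IsLinRel Γ) : IsLinRel (A0 Γ) :=
  .of_mem ⟨0, by simpa only [Prod.mk_zero_zero] using hΓ.zero_mem⟩
    (fun _ ⟨k, ha⟩ _ ⟨k', hb⟩ => ⟨k + k', by simpa using hΓ.add_mem ha hb⟩)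
    fun c _ ⟨k, ha⟩ => ⟨c • k, by simpa using hΓ.smul_mem c ha⟩

theorem isLinRel_gfield (hΓ : IsLinRel Γ) (l : ℂ) : IsLinRel (gfield Γ l) :=
  .of_mem ⟨0, by simpa only [Prod.fst_zero, Prod.snd_zero, smul_zero, Prod.mk_zero_zero] using
    hΓ.zero_mem⟩
    (fun _ ⟨k, ha⟩ _ ⟨k', hb⟩ => ⟨k + k', by simpa [smul_add] using hΓ.add_mem ha hb⟩)
    fun c _ ⟨k, ha⟩ => ⟨c • k, by simpa [smul_comm c l] using hΓ.smul_mem c ha⟩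

theorem A0_subset_adjR (hGreen : GreenPair Γ) : A0 Γ ⊆ adjR (A0 Γ) := by
  rintro p ⟨k, hp⟩ q ⟨k', hq⟩
  have := hGreen _ hq _ hp
  simp only [inner_zero_left, inner_zero_right, sub_zero] at this
  linear_combination this

theorem inner_gfield_sub_conj_smul (hGreen : GreenPair Γ) {q : E × E} {k : F}
    (hq : (q, ((0 : F), k)) ∈ Γ) {p : F × E} (hp : p ∈ gfield Γ l) :
    ⟪p.2, q.2 - starRingEnd ℂ l • q.1⟫ = ⟪p.1, k⟫ := by
  obtain ⟨h', hp⟩ := hp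
  have := hGreen _ hq _ hp
  simp only [inner_smul_left, inner_zero_right, sub_zero] at this
  rw [inner_sub_right, inner_smul_right, this]

theorem mulR_closure_gfield_subset (hGreen : GreenPair Γ) :
    mulR (closure (gfield Γ l)) ⊆ Nlam (adjR (A0 Γ)) l := by
  intro f hf
  rw [mem_Nlam_adjR_iff]
  intro v hv
  obtain ⟨q, ⟨k, hq⟩, rfl⟩ := mem_ranR_shiftSub.1 hv
  have hcl : closure (gfield Γ l) ⊆ {p | ⟪p.2, q.2 - starRingEnd ℂ l • q.1⟫ = ⟪p.1, k⟫} :=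
    closure_minimal (fun _ hp => inner_gfield_sub_conj_smul hGreen hq hp)
      (isClosed_eq (by fun_prop) (by fun_prop))
  simpa using hcl hf

variable [CompleteSpace E] [CompleteSpace F]

theorem mem_ranR_shiftSub_A0_of_orthogonal (hGreen : GreenPair Γ) (hGU : invR Γ = kreinAdj Γ)
    (hl : l.im ≠ 0) {w₀ : F} {e : E} (h : ∀ p ∈ gfield Γ l, ⟪p.1, w₀⟫ + ⟪p.2, e⟫ = 0) :
    e ∈ ranR (shiftSub (A0 Γ) (starRingEnd ℂ l)) := by
  obtain ⟨R, hR⟩ := exists_boundaryResolvent hGU hl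
  obtain ⟨R', hR'⟩ := exists_boundaryResolvent hGU (z := starRingEnd ℂ l) (by simpa using hl)
  set P := R' (e, starRingEnd ℂ l • w₀)
  have hP : ((P.1, e + starRingEnd ℂ l • P.1),
      (starRingEnd ℂ l • w₀ + starRingEnd ℂ l • P.2, P.2)) ∈ Γ := (hR' _ _ _ _).2 rfl
  -- Green's identity for `P` and `R (0, w)`, plus orthogonality of `(w₀, e)` to `γ(l)`
  have hP₂ : P.2 = -w₀ := by
    have key : ∀ w : F, ⟪w, P.2 + w₀⟫ = 0 := fun w => by
      set Q := R (0, w)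
      have hQ : ((Q.1, 0 + l • Q.1), (w + l • Q.2, Q.2)) ∈ Γ := (hR _ _ _ _).2 rfl
      have hG := hGreen _ hP _ hQ
      have horth := h (w + l • Q.2, Q.1) ⟨Q.2, by simpa using hQ⟩
      simp only [zero_add, inner_add_left, inner_add_right, inner_smul_left, inner_smul_right]
        at hG horth ⊢
      linear_combination horth - hG
    have := key (P.2 + w₀)
    rw [inner_self_eq_zero] at this
    exact eq_neg_of_add_eq_zero_left this
  refine mem_ranR_shiftSub.2 ⟨(P.1, e + starRingEnd ℂ l • P.1), ⟨-w₀, ?_⟩, by simp⟩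
  simpa [hP₂] using hP

theorem mulR_closure_gfield (hGreen : GreenPair Γ) (hGU : invR Γ = kreinAdj Γ)
    (hl : l.im ≠ 0) : mulR (closure (gfield Γ l)) = Nlam (adjR (A0 Γ)) l := by
  refine subset_antisymm (mulR_closure_gfield_subset hGreen) fun f hf => ?_
  refine (isLinRel_gfield (isLinRel_of_invR_eq_kreinAdj hGU) l).mem_closure_of_forall_inner
    fun w₀ e h => ?_
  rw [inner_zero_left, zero_add]
  exact mem_Nlam_adjR_iff.1 hf e (mem_ranR_shiftSub_A0_of_orthogonal hGreen hGU hl h)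

end GammaField

theorem domR_closure_gfield_subset {E F : Type*} [NormedAddCommGroup E] [InnerProductSpace ℂ E]
    [NormedAddCommGroup F] {Γ : Set ((E × E) × (F × F))} {l : ℂ} :
    domR (closure (gfield Γ l)) ⊆ ranR (closure (G0 Γ)) := by
  rintro u ⟨g, hg⟩
  exact ⟨(g, l • g), map_mem_closure (f := fun p : F × E => ((p.2, l • p.2), p.1))
    (by fun_prop) hg fun _ ⟨h', hp⟩ => ⟨h', hp⟩⟩

section Domains

variable {E F : Type*} [NormedAddCommGroup E] [InnerProductSpace ℂ E]
  [NormedAddCommGroup F] [InnerProductSpace ℂ F] {Γ : Set ((E × E) × (F × F))} {l : ℂ}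

theorem sub_mem_closure_gfield_of_mem_closure_G0 {R : E × F →L[ℂ] E × F}
    (hR : ∀ (f a : E) (h w : F), ((f, a + l • f), (w + l • h, h)) ∈ Γ ↔ (f, h) = R (a, w))
    {p : (E × E) × F} (hp : p ∈ closure (G0 Γ)) :
    (p.2, p.1.1) - (l • (R (p.1.2 - l • p.1.1, 0)).2, (R (p.1.2 - l • p.1.1, 0)).1) ∈
      closure (gfield Γ l) := by
  have hγ : ∀ w, (w + l • (R (0, w)).2, (R (0, w)).1) ∈ gfield Γ l := fun w =>
    ⟨(R (0, w)).2, by simpa using (hR _ 0 _ w).2 rfl⟩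
  refine closure_minimal (t := {p : (E × E) × F | (p.2, p.1.1) -
    (l • (R (p.1.2 - l • p.1.1, 0)).2, (R (p.1.2 - l • p.1.1, 0)).1) ∈ closure (gfield Γ l)}) ?_
    (isClosed_closure.preimage (by fun_prop)) hp
  rintro p ⟨h, hp⟩
  -- `R (f' - l f, Γ₀ f̂ - l Γ₁ f̂) = (f, Γ₁ f̂)`: by linearity, the part `R (0, ·)` lies in `γ(l)`
  -- and the rest depends continuously on `f' - l f` alone
  have hRp : (p.1.1, h) = R (p.1.2 - l • p.1.1, p.2 - l • h) :=
    (hR _ _ _ _).1 (by simpa using hp)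
  have hsplit : R (p.1.2 - l • p.1.1, 0) = (p.1.1, h) - R (0, p.2 - l • h) := by
    rw [hRp, ← map_sub]; simp
  rw [Set.mem_ofPred_eq, hsplit]
  convert subset_closure (hγ (p.2 - l • h)) using 1
  ext <;> simp [smul_sub]; abel

variable [CompleteSpace E] [CompleteSpace F]

theorem ranR_closure_G0_subset_domR (hGU : invR Γ = kreinAdj Γ) (hl : l.im ≠ 0)
    (hran : ranR (shiftSub (closure (A0 Γ)) l) = Set.univ) :
    ranR (closure (G0 Γ)) ⊆ domR (closure (gfield Γ l)) := by
  obtain ⟨R, hR⟩ := exists_boundaryResolvent hGU hl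
  rintro u ⟨f, hf⟩
  obtain ⟨q, hq, hqf⟩ := mem_ranR_shiftSub.1 (hran ▸ Set.mem_univ (f.2 - l • f.1))
  have hq0 : (q, (0 : F)) ∈ closure (G0 Γ) :=
    map_mem_closure (f := fun x => (x, (0 : F))) (by fun_prop) hq fun _ hx => hx
  have h1 := sub_mem_closure_gfield_of_mem_closure_G0 hR hf
  have h2 := sub_mem_closure_gfield_of_mem_closure_G0 hR hq0
  rw [hqf] at h2
  refine ⟨f.1 - q.1, ?_⟩
  convert ((isLinRel_gfield (isLinRel_of_invR_eq_kreinAdj hGU) l).closure).sub_mem h1 h2 using 1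
  ext <;> simp

end Domains

section Forms

variable {E F : Type*} [NormedAddCommGroup E] [InnerProductSpace ℂ E]
  [NormedAddCommGroup F] [InnerProductSpace ℂ F] {Γ : Set ((E × E) × (F × F))} {l : ℂ}

theorem formVal_eq_norm_sq (hGreen : GreenPair Γ) (hl : l.im ≠ 0) {f : E} {u u' : F}
    (h : ((f, l • f), (u, u')) ∈ Γ) : formVal l u u' = ‖f‖ ^ 2 := by
  have hG := hGreen _ h _ h
  simp only [inner_smul_left, inner_smul_right] at hG
  have hne : l - starRingEnd ℂ l ≠ 0 := by
    rw [Complex.sub_conj]; simpa using hl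
  have hG' : ⟪u, u'⟫ - ⟪u', u⟫ = (l - starRingEnd ℂ l) * ⟪f, f⟫ := by linear_combination -hG
  rw [formVal, hG', inv_mul_cancel_left₀ hne, inner_self_eq_norm_sq_to_K]
  simp [← Complex.ofReal_pow]

theorem tendsto_formVal_sub_iff_cauchySeq (hGreen : GreenPair Γ) (hΓ : IsLinRel Γ)
    (hl : l.im ≠ 0) {g : ℕ → E} {u u' : ℕ → F} (h : ∀ n, ((g n, l • g n), (u n, u' n)) ∈ Γ) :
    Tendsto (fun nm : ℕ × ℕ => formVal l (u nm.1 - u nm.2) (u' nm.1 - u' nm.2)) atTop (𝓝 0) ↔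
      CauchySeq g := by
  rw [cauchySeq_iff_tendsto_norm_sub_sq]
  refine tendsto_congr fun nm => formVal_eq_norm_sq hGreen hl ?_
  simpa [smul_sub] using hΓ.sub_mem (h nm.1) (h nm.2)

variable [CompleteSpace E]

theorem formClosable_weyl_iff (hGreen : GreenPair Γ) (hΓ : IsLinRel Γ) (hl : l.im ≠ 0) :
    FormClosable l (weyl Γ l) ↔ mulR (closure (gfield Γ l)) = {0} := by
  have h0 : (0 : E) ∈ mulR (closure (gfield Γ l)) :=
    subset_closure ((isLinRel_gfield hΓ l).zero_mem)
  rw [Set.eq_singleton_iff_unique_mem]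
  refine ⟨fun hclos => ⟨h0, fun f hf => ?_⟩, fun ⟨_, hmul⟩ u u' hw hu hform => ?_⟩
  · obtain ⟨x, hx, hlim⟩ := mem_closure_iff_seq_limit.1 hf
    choose u' hu' using hx
    have hg := (continuous_snd.tendsto _).comp hlim
    have hnorm := hclos _ u' (fun n => ⟨_, hu' n⟩) ((continuous_fst.tendsto _).comp hlim)
      ((tendsto_formVal_sub_iff_cauchySeq hGreen hΓ hl hu').2 hg.cauchySeq)
    have hf0 : ‖f‖ ^ 2 = 0 := tendsto_nhds_unique ((hg.norm.pow 2).congr fun n =>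
      (formVal_eq_norm_sq hGreen hl (hu' n)).symm) hnorm
    simpa using hf0
  · choose g hg using hw
    obtain ⟨f, hf⟩ := cauchySeq_tendsto_of_complete
      ((tendsto_formVal_sub_iff_cauchySeq hGreen hΓ hl hg).1 hform)
    have hf0 : f = 0 := hmul f (mem_closure_of_tendsto (hu.prodMk_nhds hf)
      (.of_forall fun n => ⟨u' n, hg n⟩))
    subst hf0
    simpa [formVal_eq_norm_sq hGreen hl (hg _)] using hf.norm.pow 2

theorem formClosureDom_weyl (hGreen : GreenPair Γ) (hΓ : IsLinRel Γ) (hl : l.im ≠ 0) :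
    formClosureDom l (weyl Γ l) = domR (closure (gfield Γ l)) := by
  ext v
  constructor
  · rintro ⟨u, u', hw, hu, hform⟩
    choose g hg using hw
    obtain ⟨f, hf⟩ := cauchySeq_tendsto_of_complete
      ((tendsto_formVal_sub_iff_cauchySeq hGreen hΓ hl hg).1 hform)
    exact ⟨f, mem_closure_of_tendsto (hu.prodMk_nhds hf) (.of_forall fun n => ⟨u' n, hg n⟩)⟩
  · rintro ⟨f, hf⟩
    obtain ⟨x, hx, hlim⟩ := mem_closure_iff_seq_limit.1 hf
    choose u' hu' using hx
    exact ⟨_, u', fun n => ⟨_, hu' n⟩, (continuous_fst.tendsto _).comp hlim,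
      (tendsto_formVal_sub_iff_cauchySeq hGreen hΓ hl hu').2
        ((continuous_snd.tendsto _).comp hlim).cauchySeq⟩

end Forms

variable {E F : Type*} [NormedAddCommGroup E] [InnerProductSpace ℂ E] [CompleteSpace E]
  [NormedAddCommGroup F] [InnerProductSpace ℂ F] [CompleteSpace F]

theorem statement16_general (A : Set (E × E)) (Γ : Set ((E × E) × (F × F)))
    (hU : IsUnitaryBT A Γ) :
    -- (i) and the equivalent range-density formulation
    ((closure (A0 Γ) = adjR (A0 Γ)) ↔
       (∀ l : ℂ, l.im ≠ 0 → Dense (ranR (shiftSub (A0 Γ) l)))) ∧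
    -- (i) ↔ (ii)
    ((closure (A0 Γ) = adjR (A0 Γ)) ↔
       (mulR (closure (gfield Γ Complex.I)) = {(0 : E)} ∧
        mulR (closure (gfield Γ (-Complex.I))) = {(0 : E)})) ∧
    -- (i) ↔ (iii)
    ((closure (A0 Γ) = adjR (A0 Γ)) ↔
       (∀ l : ℂ, l.im ≠ 0 → mulR (closure (gfield Γ l)) = {(0 : E)} ∧
          (0 < l.im →
            domR (closure (gfield Γ l)) = domR (closure (gfield Γ Complex.I))) ∧
          (l.im < 0 →
            domR (closure (gfield Γ l)) = domR (closure (gfield Γ (-Complex.I)))))) ∧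
    -- (i) ↔ (iv)
    ((closure (A0 Γ) = adjR (A0 Γ)) ↔
       (FormClosable Complex.I (weyl Γ Complex.I) ∧
        FormClosable (-Complex.I) (weyl Γ (-Complex.I)))) ∧
    -- (i) ↔ (v)
    ((closure (A0 Γ) = adjR (A0 Γ)) ↔
       (∀ l : ℂ, l.im ≠ 0 → FormClosable l (weyl Γ l) ∧
          (0 < l.im →
            formClosureDom l (weyl Γ l) = formClosureDom Complex.I (weyl Γ Complex.I)) ∧
          (l.im < 0 →
            formClosureDom l (weyl Γ l) =
              formClosureDom (-Complex.I) (weyl Γ (-Complex.I))))) ∧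
    -- moreover
    ((closure (A0 Γ) = adjR (A0 Γ)) →
       ∀ l : ℂ, l.im ≠ 0 →
         formClosureDom l (weyl Γ l) = domR (closure (gfield Γ l)) ∧
         domR (closure (gfield Γ l)) = ranR (closure (G0 Γ))) := by
  obtain ⟨⟨hGreen, -, -, hGU⟩, -⟩ := hU
  have hΓ := isLinRel_of_invR_eq_kreinAdj hGU
  have hlin := isLinRel_A0 hΓ
  have hsym := A0_subset_adjR hGreen
  have hI : Complex.I.im ≠ 0 := by simp
  have hmI : (-Complex.I).im ≠ 0 := by simp
  have hess : closure (A0 Γ) = adjR (A0 Γ) ↔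
      Nlam (adjR (A0 Γ)) Complex.I = {0} ∧ Nlam (adjR (A0 Γ)) (-Complex.I) = {0} := by
    simpa using closure_eq_adjR_iff_Nlam_eq_zero hlin hsym hI
  have hγ : ∀ l : ℂ, l.im ≠ 0 → mulR (closure (gfield Γ l)) = Nlam (adjR (A0 Γ)) l :=
    fun l hl => mulR_closure_gfield hGreen hGU hl
  have hform : ∀ l : ℂ, l.im ≠ 0 → (FormClosable l (weyl Γ l) ↔ Nlam (adjR (A0 Γ)) l = {0}) :=
    fun l hl => by rw [formClosable_weyl_iff hGreen hΓ hl, hγ l hl]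
  have hdom : closure (A0 Γ) = adjR (A0 Γ) → ∀ l : ℂ, l.im ≠ 0 →
      domR (closure (gfield Γ l)) = ranR (closure (G0 Γ)) := fun h l hl =>
    domR_closure_gfield_subset.antisymm (ranR_closure_G0_subset_domR hGU hl
      (ranR_shiftSub_closure_eq_univ hlin hsym h hl))
  have hformDom : closure (A0 Γ) = adjR (A0 Γ) → ∀ l : ℂ, l.im ≠ 0 →
      formClosureDom l (weyl Γ l) = ranR (closure (G0 Γ)) := fun h l hl => by
    rw [formClosureDom_weyl hGreen hΓ hl, hdom h l hl]
  have hK : closure (A0 Γ) = adjR (A0 Γ) → ∀ l : ℂ, l.im ≠ 0 → Nlam (adjR (A0 Γ)) l = {0} :=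
    fun h l hl => Nlam_adjR_eq_zero_of_closure_eq_adjR hsym h hl
  refine ⟨closure_eq_adjR_iff_forall_dense hlin hsym, ?_, ⟨fun h l hl => ?_, fun h => ?_⟩, ?_,
    ⟨fun h l hl => ?_, fun h => ?_⟩, fun h l hl => ⟨formClosureDom_weyl hGreen hΓ hl, hdom h l hl⟩⟩
  · rw [hγ _ hI, hγ _ hmI, hess]
  · exact ⟨(hγ l hl).trans (hK h l hl), fun _ => by rw [hdom h l hl, hdom h _ hI],
      fun _ => by rw [hdom h l hl, hdom h _ hmI]⟩
  · rw [hess, ← hγ _ hI, ← hγ _ hmI]; exact ⟨(h _ hI).1, (h _ hmI).1⟩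
  · rw [hform _ hI, hform _ hmI, hess]
  · exact ⟨(hform l hl).2 (hK h l hl), fun _ => by rw [hformDom h l hl, hformDom h _ hI],
      fun _ => by rw [hformDom h l hl, hformDom h _ hmI]⟩
  · rw [hess, ← hform _ hI, ← hform _ hmI]; exact ⟨(h _ hI).1, (h _ hmI).1⟩

/-- characterizations of ES-generalized boundary triples (essential
selfadjointness of `A₀`) via closability of the γ-field and of the forms `t_{M(λ)}`,
together with the identification of the common (form) domains. -/
theorem statement16 (A : Set (E × E)) (Γ : Set ((E × E) × (F × F)))
    (hA : IsClosedSymRel A) (hU : IsUnitaryBT A Γ) :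
    -- (i) and the equivalent range-density formulation
    ((closure (A0 Γ) = adjR (A0 Γ)) ↔
       (∀ l : ℂ, l.im ≠ 0 → Dense (ranR (shiftSub (A0 Γ) l)))) ∧
    -- (i) ↔ (ii)
    ((closure (A0 Γ) = adjR (A0 Γ)) ↔
       (mulR (closure (gfield Γ Complex.I)) = {(0 : E)} ∧
        mulR (closure (gfield Γ (-Complex.I))) = {(0 : E)})) ∧
    -- (i) ↔ (iii)
    ((closure (A0 Γ) = adjR (A0 Γ)) ↔
       (∀ l : ℂ, l.im ≠ 0 → mulR (closure (gfield Γ l)) = {(0 : E)} ∧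
          (0 < l.im →
            domR (closure (gfield Γ l)) = domR (closure (gfield Γ Complex.I))) ∧
          (l.im < 0 →
            domR (closure (gfield Γ l)) = domR (closure (gfield Γ (-Complex.I)))))) ∧
    -- (i) ↔ (iv)
    ((closure (A0 Γ) = adjR (A0 Γ)) ↔
       (FormClosable Complex.I (weyl Γ Complex.I) ∧
        FormClosable (-Complex.I) (weyl Γ (-Complex.I)))) ∧
    -- (i) ↔ (v)
    ((closure (A0 Γ) = adjR (A0 Γ)) ↔
       (∀ l : ℂ, l.im ≠ 0 → FormClosable l (weyl Γ l) ∧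
          (0 < l.im →
            formClosureDom l (weyl Γ l) = formClosureDom Complex.I (weyl Γ Complex.I)) ∧
          (l.im < 0 →
            formClosureDom l (weyl Γ l) =
              formClosureDom (-Complex.I) (weyl Γ (-Complex.I))))) ∧
    -- moreover
    ((closure (A0 Γ) = adjR (A0 Γ)) →
       ∀ l : ℂ, l.im ≠ 0 →
         formClosureDom l (weyl Γ l) = domR (closure (gfield Γ l)) ∧
         domR (closure (gfield Γ l)) = ranR (closure (G0 Γ))) :=
  statement16_general A Γ hU

end BT
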